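/- arXiv:2210.13275 — 2 statements merged into one kernel-verified Lean document; each statement's English description precedes it below -/
import Mathlib

section
/- Let $(Z_i)$ be strictly stationary with $Z_1$ regularly varying with index $\alpha\in(0,1)$, and let $(a_n)$ satisfy $n\Pr(|Z_1|>a_n)\to 1$. Then for every $\epsilon>0$, $\lim_{u\downarrow 0}\limsup_{n\to\infty}\Pr\big[\max_{1\le k\le n}\big|\sum_{i=1}^{k}\big(\tfrac{Z_i}{a_n}1_{\{|Z_i|\le u a_n\}}-\mathrm{E}(\tfrac{Z_1}{a_n}1_{\{|Z_1|\le u a_n\}})\big)\big|>\epsilon\big]=0$. -/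
/-!
By the triangle inequality and Markov's inequality, and because the `Z i` are identically
distributed, the probability in question is at most `(2n / (ε a_n)) E(|Z₁| 1{|Z₁| ≤ u a_n})`.
A Potter bound `P(|Z₁| > y) ≤ 2^β (x / y)^β P(|Z₁| > x)` (`x₀ ≤ y ≤ x`, `α < β < 1`), obtained by
iterating the doubling estimate that slow variation gives, turns the layer-cake formula into
Karamata's bound `E(|Z₁| 1{|Z₁| ≤ t}) ≤ A + C t P(|Z₁| > t)`. Since also `n / a_n → 0`, the
probability is asymptotically at most `(2C / ε) u · n P(|Z₁| > u a_n) → (2C / ε) u^(1 - α)`,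
which vanishes as `u ↓ 0`.
-/

open MeasureTheory ProbabilityTheory Filter Set Topology

noncomputable section

/-- `L` is slowly varying at infinity. -/
def SlowlyVarying (L : ℝ → ℝ) : Prop :=
  (∀ x > (0:ℝ), 0 < L x) ∧ ∀ t > (0:ℝ), Tendsto (fun x => L (t * x) / L x) atTop (nhds 1)

/-- Strict stationarity: the joint law of the sequence is invariant under shifts. -/
def StrictlyStationary {Ω : Type*} [MeasureSpace Ω] (Z : ℤ → Ω → ℝ) : Prop :=
  ∀ k : ℤ, IdentDistrib (fun ω (i : ℤ) => Z (i + k) ω) (fun ω (i : ℤ) => Z i ω)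
    (ℙ : Measure Ω) (ℙ : Measure Ω)

section AntitoneFunctions

variable {T : ℝ → ℝ} {β x₀ : ℝ}

lemma le_rpow_pow_mul_of_doubling (hdbl : ∀ x ≥ x₀, T x ≤ 2 ^ β * T (2 * x)) (hx₀ : 0 ≤ x₀) :
    ∀ (k : ℕ) {y : ℝ}, x₀ ≤ y → T y ≤ (2 ^ β) ^ k * T (2 ^ k * y)
  | 0, y, _ => by simp
  | k + 1, y, hy => calc
      T y ≤ 2 ^ β * T (2 * y) := hdbl y hy
      _ ≤ 2 ^ β * ((2 ^ β) ^ k * T (2 ^ k * (2 * y))) := by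
        gcongr
        exact le_rpow_pow_mul_of_doubling hdbl hx₀ k (by linarith)
      _ = (2 ^ β) ^ (k + 1) * T (2 ^ (k + 1) * y) := by
        rw [show (2 : ℝ) ^ (k + 1) * y = 2 ^ k * (2 * y) by ring]; ring

lemma Antitone.le_rpow_div_mul_of_doubling (hT : Antitone T) (hT0 : ∀ x, 0 ≤ T x) (hβ : 0 ≤ β)
    (hx₀ : 0 < x₀) (hdbl : ∀ x ≥ x₀, T x ≤ 2 ^ β * T (2 * x)) {x y : ℝ} (hy : x₀ ≤ y)
    (hyx : y ≤ x) : T y ≤ 2 ^ β * (x / y) ^ β * T x := by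
  have hy0 : 0 < y := hx₀.trans_le hy
  obtain ⟨k, hk, hk'⟩ := exists_nat_pow_near ((one_le_div hy0).2 hyx) one_lt_two
  have hpow : ((2 : ℝ) ^ β) ^ (k + 1) ≤ 2 ^ β * (x / y) ^ β := by
    rw [← Real.rpow_natCast, ← Real.rpow_mul zero_le_two, mul_comm, Real.rpow_mul zero_le_two,
      Real.rpow_natCast, ← Real.mul_rpow zero_le_two (div_pos (hy0.trans_le hyx) hy0).le]
    gcongr
    rw [pow_succ']
    gcongr
  calc T y ≤ (2 ^ β) ^ (k + 1) * T (2 ^ (k + 1) * y) :=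
        le_rpow_pow_mul_of_doubling hdbl hx₀.le (k + 1) hy
    _ ≤ (2 ^ β) ^ (k + 1) * T x := by
        gcongr
        exact hT ((div_le_iff₀ hy0).1 hk'.le)
    _ ≤ 2 ^ β * (x / y) ^ β * T x := by gcongr; exact hT0 x

lemma Antitone.tendsto_mul_atTop_of_doubling (hT : Antitone T) (hT0 : ∀ x, 0 ≤ T x)
    (hβ0 : 0 ≤ β) (hβ1 : β < 1) (hx₀ : 0 < x₀) (hTx₀ : 0 < T x₀)
    (hdbl : ∀ x ≥ x₀, T x ≤ 2 ^ β * T (2 * x)) : Tendsto (fun x => x * T x) atTop atTop := by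
  have hc : 0 < T x₀ / (2 ^ β * x₀⁻¹ ^ β) := by positivity
  refine tendsto_atTop_mono' atTop ?_
    (((tendsto_rpow_atTop (sub_pos.2 hβ1)).const_mul_atTop hc))
  filter_upwards [eventually_ge_atTop x₀] with x hx
  have hx0 : 0 < x := hx₀.trans_le hx
  have h := hT.le_rpow_div_mul_of_doubling hT0 hβ0 hx₀ hdbl le_rfl hx
  rw [div_eq_mul_inv, Real.mul_rpow hx0.le (by positivity)] at h
  calc T x₀ / (2 ^ β * x₀⁻¹ ^ β) * x ^ (1 - β)
      ≤ 2 ^ β * (x ^ β * x₀⁻¹ ^ β) * T x / (2 ^ β * x₀⁻¹ ^ β) * x ^ (1 - β) := by gcongr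
    _ = x * T x := by
      rw [Real.rpow_sub hx0, Real.rpow_one]
      field_simp

lemma Antitone.intervalIntegral_le_of_rpow_bound (hT : Antitone T) {t C : ℝ} (hβ : β < 1)
    (hx₀ : 0 < x₀) (hx₀t : x₀ ≤ t) (hTt : 0 ≤ T t) (hC : 0 ≤ C)
    (hbound : ∀ y ∈ Icc x₀ t, T y ≤ C * (t / y) ^ β * T t) :
    ∫ s in 0..t, T s ≤ x₀ * T 0 + C / (1 - β) * (t * T t) := by
  have ht : 0 < t := hx₀.trans_le hx₀t
  have hβ' : 0 < 1 - β := sub_pos.2 hβ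
  have hhead : ∫ s in 0..x₀, T s ≤ x₀ * T 0 := by
    simpa using intervalIntegral.integral_mono_on (μ := volume) hx₀.le hT.intervalIntegrable
      intervalIntegrable_const fun s hs => hT hs.1
  have htail : ∫ s in x₀..t, T s ≤ C / (1 - β) * (t * T t) := calc
    ∫ s in x₀..t, T s ≤ ∫ s in x₀..t, C * t ^ β * T t * s ^ (-β) := by
      refine intervalIntegral.integral_mono_on hx₀t hT.intervalIntegrable
        ((intervalIntegral.intervalIntegrable_rpow' (by linarith)).const_mul _) fun s hs => ?_
      have hs0 : 0 < s := hx₀.trans_le hs.1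
      calc T s ≤ C * (t / s) ^ β * T t := hbound s hs
        _ = C * t ^ β * T t * s ^ (-β) := by
          rw [Real.div_rpow ht.le hs0.le, Real.rpow_neg hs0.le]; ring
    _ = C * t ^ β * T t * ((t ^ (1 - β) - x₀ ^ (1 - β)) / (1 - β)) := by
      rw [intervalIntegral.integral_const_mul, integral_rpow (Or.inl (by linarith))]
      ring_nf
    _ ≤ C * t ^ β * T t * (t ^ (1 - β) / (1 - β)) := by
      gcongr
      exact sub_le_self _ (by positivity)
    _ = C / (1 - β) * (t * T t) := by
      rw [Real.rpow_sub ht, Real.rpow_one]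
      field_simp
  rw [← intervalIntegral.integral_add_adjacent_intervals hT.intervalIntegrable
    hT.intervalIntegrable]
  exact add_le_add hhead htail

lemma Antitone.tendsto_atTop_of_tendsto_nhds_zero (hT : Antitone T) (hpos : ∀ x, 0 < T x)
    {ι : Type*} {l : Filter ι} {a : ι → ℝ} (ha : Tendsto (fun i => T (a i)) l (𝓝 0)) :
    Tendsto a l atTop :=
  tendsto_atTop.2 fun M =>
    (ha.eventually (gt_mem_nhds (hpos M))).mono fun _ hi => (hT.reflect_lt hi).le

end AntitoneFunctions

namespace SlowlyVarying

variable {L T : ℝ → ℝ} {α : ℝ}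

lemma pos_of_antitone (hL : SlowlyVarying L) (hT : Antitone T)
    (hTL : ∀ x > 0, T x = x ^ (-α) * L x) (x : ℝ) : 0 < T x := by
  refine lt_of_lt_of_le ?_ (hT (le_max_left x 1))
  rw [hTL _ (by positivity)]
  exact mul_pos (by positivity) (hL.1 _ (by positivity))

lemma exists_le_two_rpow_mul (hL : SlowlyVarying L) (hTL : ∀ x > 0, T x = x ^ (-α) * L x)
    {β : ℝ} (hαβ : α < β) : ∃ x₀ > 0, ∀ x ≥ x₀, T x ≤ 2 ^ β * T (2 * x) := by
  have hratio : Tendsto (fun x => 2 ^ α * (L (2 * x) / L x)⁻¹) atTop (𝓝 (2 ^ α)) := by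
    simpa using ((hL.2 2 two_pos).inv₀ one_ne_zero).const_mul ((2 : ℝ) ^ α)
  obtain ⟨x₁, hx₁⟩ := eventually_atTop.1
    (hratio.eventually_lt_const (Real.rpow_lt_rpow_of_exponent_lt one_lt_two hαβ))
  refine ⟨max x₁ 1, by positivity, fun x hx => ?_⟩
  have hx0 : 0 < x := lt_of_lt_of_le (by positivity) hx
  have h := hx₁ x (le_of_max_le_left hx)
  rw [inv_div, mul_div_assoc', div_lt_iff₀ (hL.1 (2 * x) (by positivity))] at h
  rw [hTL x hx0, hTL (2 * x) (by positivity), Real.mul_rpow zero_le_two hx0.le,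
    Real.rpow_neg zero_le_two]
  calc x ^ (-α) * L x = x ^ (-α) * (2 ^ α)⁻¹ * (2 ^ α * L x) := by field_simp
    _ ≤ x ^ (-α) * (2 ^ α)⁻¹ * (2 ^ β * L (2 * x)) := by gcongr
    _ = 2 ^ β * ((2 ^ α)⁻¹ * x ^ (-α) * L (2 * x)) := by ring

lemma tendsto_mul_comp_const_mul (hL : SlowlyVarying L) (hTL : ∀ x > 0, T x = x ^ (-α) * L x)
    {c : ℝ} (hc : 0 < c) {ι : Type*} {l : Filter ι} {f g : ι → ℝ} (hf : Tendsto f l atTop)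
    (hg : Tendsto (fun i => g i * T (f i)) l (𝓝 1)) :
    Tendsto (fun i => g i * T (c * f i)) l (𝓝 (c ^ (-α))) := by
  have h := hg.mul (((hL.2 c hc).comp hf).const_mul (c ^ (-α)))
  rw [one_mul, mul_one] at h
  refine h.congr' ?_
  filter_upwards [hf.eventually_gt_atTop 0] with i hi
  have := hL.1 _ hi
  simp only [Function.comp_apply, hTL _ hi, hTL _ (mul_pos hc hi), Real.mul_rpow hc.le hi.le]
  field_simp

end SlowlyVarying

section Truncation

variable {Ω : Type*} [MeasurableSpace Ω] {μ : Measure Ω} [IsFiniteMeasure μ] {X : Ω → ℝ}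

lemma integral_ite_abs_le_intervalIntegral_measureReal (hX : Measurable X) {t : ℝ} (ht : 0 ≤ t) :
    ∫ ω, (if |X ω| ≤ t then |X ω| else 0) ∂μ ≤ ∫ s in 0..t, μ.real {ω | s < |X ω|} := by
  set g : Ω → ℝ := fun ω => if |X ω| ≤ t then |X ω| else 0
  have hg0 : ∀ ω, 0 ≤ g ω := fun ω => by positivity
  have hgt : ∀ ω, g ω ≤ t := fun ω => by
    simp only [g]; split_ifs with h
    exacts [h, ht]
  have hgX : ∀ ω, g ω ≤ |X ω| := fun ω => by
    simp only [g]; split_ifs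
    exacts [le_rfl, abs_nonneg _]
  have hgi : Integrable g μ :=
    (integrable_const t).mono'
      (Measurable.ite (measurableSet_le hX.abs measurable_const) hX.abs
        measurable_const).aestronglyMeasurable
      (ae_of_all _ fun ω => (Real.norm_of_nonneg (hg0 ω)).trans_le (hgt ω))
  have hanti : ∀ f : Ω → ℝ, Antitone fun s => μ.real {ω | s < f ω} :=
    fun f s s' hss' => measureReal_mono fun ω hω => hss'.trans_lt hω
  rw [hgi.integral_eq_integral_meas_lt (ae_of_all _ hg0),
    setIntegral_eq_of_subset_of_forall_sdiff_eq_zero measurableSet_Ioi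
      (Ioc_subset_Ioi_self (a := t) (b := (0 : ℝ))),
    ← intervalIntegral.integral_of_le ht]
  · exact intervalIntegral.integral_mono_on ht (hanti g).intervalIntegrable
      (hanti _).intervalIntegrable fun s _ => measureReal_mono fun ω hω => hω.trans_le (hgX ω)
  · rintro s ⟨hs0, hst⟩
    have hts : t < s := lt_of_not_ge fun h => hst ⟨hs0, h⟩
    have hempty : {ω | s < g ω} = ∅ :=
      eq_empty_of_forall_notMem fun ω hω => (hgt ω).not_gt (hts.trans hω)
    simp [hempty]

lemma integral_ite_abs_le_of_doubling (hX : Measurable X) {β x₀ : ℝ} (hβ0 : 0 ≤ β) (hβ1 : β < 1)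
    (hx₀ : 0 < x₀)
    (hdbl : ∀ x ≥ x₀, μ.real {ω | x < |X ω|} ≤ 2 ^ β * μ.real {ω | 2 * x < |X ω|})
    {t : ℝ} (ht : x₀ ≤ t) :
    ∫ ω, (if |X ω| ≤ t then |X ω| else 0) ∂μ
      ≤ x₀ * μ.real {ω | 0 < |X ω|} + 2 ^ β / (1 - β) * (t * μ.real {ω | t < |X ω|}) := by
  set T : ℝ → ℝ := fun s => μ.real {ω | s < |X ω|}
  have hT : Antitone T := fun s s' hss' => measureReal_mono fun ω hω => hss'.trans_lt hω
  exact (integral_ite_abs_le_intervalIntegral_measureReal hX (hx₀.le.trans ht)).trans <|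
    hT.intervalIntegral_le_of_rpow_bound hβ1 hx₀ ht measureReal_nonneg (by positivity)
      fun y hy => hT.le_rpow_div_mul_of_doubling (fun _ => measureReal_nonneg) hβ0 hx₀ hdbl
        hy.1 hy.2

end Truncation

lemma StrictlyStationary.identDistrib {Ω : Type*} [MeasureSpace Ω] {Z : ℤ → Ω → ℝ}
    (hZ : StrictlyStationary Z) (i j : ℤ) : IdentDistrib (Z i) (Z j) ℙ ℙ := by
  simpa [Function.comp_def] using (hZ (i - j)).comp (measurable_pi_apply j)

section MaximalInequality

variable {Ω : Type*} [MeasurableSpace Ω] {μ : Measure Ω} {ε : ℝ}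

lemma measureReal_exists_abs_partialSum_gt_le [IsFiniteMeasure μ] {X : ℕ → Ω → ℝ}
    (hX : ∀ i, Integrable (X i) μ) (hε : 0 < ε) (n : ℕ) :
    μ.real {ω | ∃ k ∈ Finset.Icc 1 n, ε < |∑ i ∈ Finset.Icc 1 k, X i ω|}
      ≤ ε⁻¹ * ∑ i ∈ Finset.Icc 1 n, ∫ ω, |X i ω| ∂μ := by
  have hsub : {ω | ∃ k ∈ Finset.Icc 1 n, ε < |∑ i ∈ Finset.Icc 1 k, X i ω|}
      ⊆ {ω | ε ≤ ∑ i ∈ Finset.Icc 1 n, |X i ω|} := by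
    rintro ω ⟨k, hk, hεk⟩
    calc ε ≤ |∑ i ∈ Finset.Icc 1 k, X i ω| := hεk.le
      _ ≤ ∑ i ∈ Finset.Icc 1 k, |X i ω| := Finset.abs_sum_le_sum_abs _ _
      _ ≤ ∑ i ∈ Finset.Icc 1 n, |X i ω| :=
        Finset.sum_le_sum_of_subset_of_nonneg (Finset.Icc_subset_Icc_right (Finset.mem_Icc.1 hk).2)
          fun i _ _ => abs_nonneg _
  have hmarkov := mul_meas_ge_le_integral_of_nonneg
    (ae_of_all μ fun ω => Finset.sum_nonneg fun i _ => abs_nonneg (X i ω))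
    (integrable_finsetSum (Finset.Icc 1 n) fun i _ => (hX i).abs) ε
  rw [integral_finsetSum _ fun i _ => (hX i).abs] at hmarkov
  rw [le_inv_mul_iff₀ hε]
  exact (mul_le_mul_of_nonneg_left (measureReal_mono hsub) hε.le).trans hmarkov

lemma integral_abs_sub_integral_le [IsProbabilityMeasure μ] {Y : Ω → ℝ} (hY : Integrable Y μ) :
    ∫ ω, |Y ω - ∫ x, Y x ∂μ| ∂μ ≤ 2 * ∫ ω, |Y ω| ∂μ := by
  calc ∫ ω, |Y ω - ∫ x, Y x ∂μ| ∂μ ≤ ∫ ω, (|Y ω| + |∫ x, Y x ∂μ|) ∂μ :=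
        integral_mono (hY.sub (integrable_const _)).abs (hY.abs.add (integrable_const _))
          fun ω => abs_sub _ _
    _ = ∫ ω, |Y ω| ∂μ + |∫ x, Y x ∂μ| := by simp [integral_add hY.abs (integrable_const _)]
    _ ≤ 2 * ∫ ω, |Y ω| ∂μ := by linarith [abs_integral_le_integral_abs (f := Y) (μ := μ)]

lemma measureReal_exists_abs_centered_partialSum_gt_le [IsProbabilityMeasure μ]
    {Y : ℕ → Ω → ℝ} (hY : ∀ i, IdentDistrib (Y i) (Y 1) μ μ) (hY1 : Integrable (Y 1) μ)
    (hε : 0 < ε) (n : ℕ) :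
    μ.real {ω | ∃ k ∈ Finset.Icc 1 n, ε < |∑ i ∈ Finset.Icc 1 k, (Y i ω - ∫ x, Y 1 x ∂μ)|}
      ≤ 2 / ε * (n * ∫ ω, |Y 1 ω| ∂μ) := by
  set c := ∫ x, Y 1 x ∂μ
  have hcentered : ∀ i, IdentDistrib (fun ω => |Y i ω - c|) (fun ω => |Y 1 ω - c|) μ μ :=
    fun i => (hY i).comp (measurable_id.sub_const c).abs
  refine (measureReal_exists_abs_partialSum_gt_le (X := fun i ω => Y i ω - c)
    (fun i => ((hY i).integrable_iff.2 hY1).sub (integrable_const c)) hε n).trans ?_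
  rw [Finset.sum_congr rfl fun i _ => (hcentered i).integral_eq, Finset.sum_const, Nat.card_Icc,
    nsmul_eq_mul, Nat.add_sub_cancel]
  calc ε⁻¹ * (n * ∫ ω, |Y 1 ω - c| ∂μ) ≤ ε⁻¹ * (n * (2 * ∫ ω, |Y 1 ω| ∂μ)) := by
        gcongr; exact integral_abs_sub_integral_le hY1
    _ = 2 / ε * (n * ∫ ω, |Y 1 ω| ∂μ) := by ring

end MaximalInequality

section TruncatedSums

variable {Ω : Type*} [MeasureSpace Ω] [IsProbabilityMeasure (ℙ : Measure Ω)] {Z : ℤ → Ω → ℝ}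
  {ε : ℝ}

lemma measureReal_exists_abs_truncated_partialSum_gt_le (hZm : ∀ i, Measurable (Z i))
    (hstat : StrictlyStationary Z) (hε : 0 < ε) (t : ℝ) {b : ℝ} (hb : 0 < b) (n : ℕ) :
    (ℙ : Measure Ω).real {ω | ∃ k ∈ Finset.Icc 1 n, ε <
        |∑ i ∈ Finset.Icc 1 k, ((if |Z (i : ℤ) ω| ≤ t then Z (i : ℤ) ω / b else 0)
          - ∫ x : Ω, (if |Z 1 x| ≤ t then Z 1 x / b else 0) ∂(ℙ : Measure Ω))|}
      ≤ 2 / ε * (n / b * ∫ ω, (if |Z 1 ω| ≤ t then |Z 1 ω| else 0) ∂(ℙ : Measure Ω)) := by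
  set φ : ℝ → ℝ := fun z => if |z| ≤ t then z / b else 0
  have hφ : Measurable φ :=
    Measurable.ite (measurableSet_le measurable_abs measurable_const) (measurable_div_const b)
      measurable_const
  have hφ_bound : ∀ z, |φ z| ≤ |t| / b := fun z => by
    simp only [φ]; split_ifs with h
    · rw [abs_div, abs_of_pos hb]
      exact div_le_div_of_nonneg_right (h.trans (le_abs_self t)) hb.le
    · simp only [abs_zero]; positivity
  have hφ_abs : ∀ z, |φ z| = (if |z| ≤ t then |z| else 0) / b := fun z => by
    simp only [φ]; split_ifs
    · rw [abs_div, abs_of_pos hb]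
    · simp
  have hint : Integrable (fun ω => φ (Z 1 ω)) ℙ :=
    (integrable_const (|t| / b)).mono' (hφ.comp (hZm 1)).aestronglyMeasurable
      (ae_of_all _ fun ω => hφ_bound _)
  have h := measureReal_exists_abs_centered_partialSum_gt_le (Y := fun i ω => φ (Z i ω))
    (fun i => (hstat.identDistrib i 1).comp hφ) hint hε n
  simp only [hφ_abs, integral_div, Nat.cast_one] at h
  exact h.trans_eq (by ring)

lemma limsup_measureReal_exists_abs_truncated_partialSum_gt_le (hZm : ∀ i, Measurable (Z i))
    (hstat : StrictlyStationary Z) (hε : 0 < ε) {a : ℕ → ℝ} (ha : ∀ n, 0 < a n)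
    (ha_top : Tendsto a atTop atTop) (hn_div_a : Tendsto (fun n : ℕ => n / a n) atTop (𝓝 0))
    {x₀ A C : ℝ} (hmoment : ∀ t ≥ x₀, ∫ ω, (if |Z 1 ω| ≤ t then |Z 1 ω| else 0) ∂ℙ
      ≤ A + C * (t * (ℙ : Measure Ω).real {ω | t < |Z 1 ω|}))
    {u ℓ : ℝ} (hu : 0 < u) (hℓ : Tendsto (fun n : ℕ => n * (ℙ : Measure Ω).real
      {ω | u * a n < |Z 1 ω|}) atTop (𝓝 ℓ)) :
    limsup (fun n : ℕ => (ℙ : Measure Ω).real {ω | ∃ k ∈ Finset.Icc 1 n, ε <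
        |∑ i ∈ Finset.Icc 1 k, ((if |Z (i : ℤ) ω| ≤ u * a n then Z (i : ℤ) ω / a n else 0)
          - ∫ x : Ω, (if |Z 1 x| ≤ u * a n then Z 1 x / a n else 0) ∂(ℙ : Measure Ω))|}) atTop
      ≤ 2 / ε * (C * u * ℓ) := by
  have hdom : Tendsto (fun n : ℕ => 2 / ε * (A * (n / a n) + C * u * (n * (ℙ : Measure Ω).real
      {ω | u * a n < |Z 1 ω|}))) atTop (𝓝 (2 / ε * (C * u * ℓ))) := by
    simpa using ((hn_div_a.const_mul A).add (hℓ.const_mul (C * u))).const_mul (2 / ε)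
  refine (limsup_le_limsup ?_ (isCoboundedUnder_le_of_le _ fun n => measureReal_nonneg)
    hdom.isBoundedUnder_le).trans_eq hdom.limsup_eq
  filter_upwards [ha_top.eventually_ge_atTop (x₀ / u)] with n hn
  have hx₀u : x₀ ≤ u * a n := by rwa [div_le_iff₀' hu] at hn
  calc _ ≤ 2 / ε * (n / a n * ∫ ω, (if |Z 1 ω| ≤ u * a n then |Z 1 ω| else 0) ∂ℙ) :=
        measureReal_exists_abs_truncated_partialSum_gt_le hZm hstat hε _ (ha n) n
    _ ≤ 2 / ε * (n / a n * (A + C * (u * a n * (ℙ : Measure Ω).real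
          {ω | u * a n < |Z 1 ω|}))) := by
        gcongr
        exacts [div_nonneg n.cast_nonneg (ha n).le, hmoment _ hx₀u]
    _ = _ := by have := ha n; field_simp

end TruncatedSums

lemma tendsto_nhds_zero_of_tendsto_nat_mul {b : ℕ → ℝ} {c : ℝ}
    (h : Tendsto (fun n : ℕ => n * b n) atTop (𝓝 c)) : Tendsto b atTop (𝓝 0) := by
  simpa using (h.mul tendsto_inv_atTop_nhds_zero_nat).congr'
    ((eventually_ne_atTop 0).mono fun n hn => by field_simp)

lemma tendsto_div_nhds_zero_of_tendsto_mul {ι : Type*} {l : Filter ι} {g a b : ι → ℝ} {c : ℝ}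
    (hg : Tendsto (fun i => g i * b i) l (𝓝 c)) (ha : Tendsto (fun i => a i * b i) l atTop)
    (hb : ∀ i, b i ≠ 0) : Tendsto (fun i => g i / a i) l (𝓝 0) := by
  have h := hg.mul ha.inv_tendsto_atTop
  rw [mul_zero] at h
  refine h.congr fun i => ?_
  simp only [Pi.inv_apply]
  rw [mul_inv, mul_mul_mul_comm, mul_inv_cancel₀ (hb i), mul_one, div_eq_mul_inv]

lemma tendsto_nhdsGT_zero_of_le_rpow {f : ℝ → ℝ} {D γ : ℝ} (hγ : 0 < γ)
    (hf0 : ∀ u > 0, 0 ≤ f u) (hf : ∀ u > 0, f u ≤ D * u ^ γ) : Tendsto f (𝓝[>] 0) (𝓝 0) := by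
  have hrpow : Tendsto (fun u : ℝ => D * u ^ γ) (𝓝[>] 0) (𝓝 0) := by
    have h := ((Real.continuousAt_rpow_const 0 γ (Or.inr hγ.le)).tendsto.const_mul D).mono_left
      (nhdsWithin_le_nhds (s := Ioi 0))
    rwa [Real.zero_rpow hγ.ne', mul_zero] at h
  exact tendsto_of_tendsto_of_tendsto_of_le_of_le' tendsto_const_nhds hrpow
    (eventually_nhdsWithin_of_forall hf0) (eventually_nhdsWithin_of_forall hf)

/-- vanishing of small truncated centered sums, `α ∈ (0,1)`. -/
theorem stmt3 {Ω : Type*} [MeasureSpace Ω] [IsProbabilityMeasure (ℙ : Measure Ω)]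
    (Z : ℤ → Ω → ℝ) (hZm : ∀ i, Measurable (Z i)) (hstat : StrictlyStationary Z)
    (α : ℝ) (hα : α ∈ Set.Ioo (0:ℝ) 1) (L : ℝ → ℝ) (hL : SlowlyVarying L)
    (htail : ∀ x > (0:ℝ), (ℙ : Measure Ω) {ω | x < |Z 1 ω|} = ENNReal.ofReal (x ^ (-α) * L x))
    (a : ℕ → ℝ) (ha : ∀ n, 0 < a n)
    (hna : Tendsto (fun n : ℕ => (n : ℝ) * ((ℙ : Measure Ω) {ω | a n < |Z 1 ω|}).toReal)
      atTop (nhds 1))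
    (ε : ℝ) (hε : 0 < ε) :
    Tendsto (fun u : ℝ =>
        Filter.limsup (fun n : ℕ =>
          ((ℙ : Measure Ω) {ω | ∃ k ∈ Finset.Icc 1 n, ε <
              |∑ i ∈ Finset.Icc 1 k,
                ((if |Z (i : ℤ) ω| ≤ u * a n then Z (i : ℤ) ω / a n else 0)
                  - ∫ x : Ω, (if |Z 1 x| ≤ u * a n then Z 1 x / a n else 0)
                      ∂(ℙ : Measure Ω))|}).toReal) atTop)
      (nhdsWithin 0 (Set.Ioi 0)) (nhds 0) := by
  obtain ⟨hα0, hα1⟩ := hα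
  set T : ℝ → ℝ := fun x => (ℙ : Measure Ω).real {ω | x < |Z 1 ω|}
  have hnT : Tendsto (fun n : ℕ => n * T (a n)) atTop (𝓝 1) := hna
  have hT_anti : Antitone T := fun x y hxy => measureReal_mono fun ω hω => hxy.trans_lt hω
  have hTL : ∀ x > 0, T x = x ^ (-α) * L x := fun x hx => by
    show ((ℙ : Measure Ω) _).toReal = _
    rw [htail x hx, ENNReal.toReal_ofReal (mul_nonneg (by positivity) (hL.1 x hx).le)]
  have hT_pos : ∀ x, 0 < T x := hL.pos_of_antitone hT_anti hTL
  obtain ⟨β, hαβ, hβ1⟩ := exists_between hα1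
  have hβ0 : 0 ≤ β := by linarith
  obtain ⟨x₀, hx₀, hdbl⟩ := hL.exists_le_two_rpow_mul hTL hαβ
  have ha_top : Tendsto a atTop atTop :=
    hT_anti.tendsto_atTop_of_tendsto_nhds_zero hT_pos (tendsto_nhds_zero_of_tendsto_nat_mul hnT)
  have hn_div_a : Tendsto (fun n : ℕ => n / a n) atTop (𝓝 0) :=
    tendsto_div_nhds_zero_of_tendsto_mul hnT
      ((hT_anti.tendsto_mul_atTop_of_doubling (fun x => (hT_pos x).le) hβ0 hβ1 hx₀ (hT_pos x₀)
        hdbl).comp ha_top) fun n => (hT_pos (a n)).ne'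
  refine tendsto_nhdsGT_zero_of_le_rpow (D := 2 / ε * (2 ^ β / (1 - β))) (sub_pos.2 hα1)
    (fun u _ => le_limsup_of_frequently_le (.of_forall fun n => ENNReal.toReal_nonneg)
      (isBoundedUnder_of ⟨1, fun n => measureReal_le_one⟩)) fun u hu => ?_
  refine (limsup_measureReal_exists_abs_truncated_partialSum_gt_le hZm hstat hε ha ha_top
    hn_div_a (fun t ht => integral_ite_abs_le_of_doubling (hZm 1) hβ0 hβ1 hx₀ hdbl ht) hu
    (hL.tendsto_mul_comp_const_mul hTL hu ha_top hnT)).trans_eq ?_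
  rw [Real.rpow_sub hu, Real.rpow_one, Real.rpow_neg hu.le]
  ring
end
end

section
/- The map $h:D^2_{\uparrow}\to D^1_{\uparrow}$ defined by $h(x,y)(t)=x(t)\vee y(t)$ is continuous when $D^2_{\uparrow}$ carries the weak Skorokhod $M_1$ topology and $D^1_{\uparrow}$ the standard $M_1$ topology. -/
open MeasureTheory Filter Set Topology

noncomputable section

/-- Left limit of `x` at `t`, with the convention `x(0-) = x(0)`. -/
def lft (x : ℝ → ℝ) (t : ℝ) : ℝ := if t = 0 then x 0 else Function.leftLim x t

/-- `x` is càdlàg on `[0,1]`: right-continuous on `[0,1)` and with left limits on `(0,1]`. -/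
def Cadlag (x : ℝ → ℝ) : Prop :=
  (∀ t ∈ Set.Ico (0:ℝ) 1, ContinuousWithinAt x (Set.Ici t) t) ∧
  (∀ t ∈ Set.Ioc (0:ℝ) 1, Tendsto x (nhdsWithin t (Set.Iio t)) (nhds (Function.leftLim x t)))

/-- The completed (thin) graph of `x`. -/
def thinGraph (x : ℝ → ℝ) : Set (ℝ × ℝ) :=
  {q | q.1 ∈ Set.Icc (0:ℝ) 1 ∧
    ∃ l ∈ Set.Icc (0:ℝ) 1, q.2 = l * lft x q.1 + (1 - l) * x q.1}

/-- The order on the completed graph of `x`. -/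
def GraphLe (x : ℝ → ℝ) (a b : ℝ × ℝ) : Prop :=
  a.1 < b.1 ∨ (a.1 = b.1 ∧ |lft x a.1 - a.2| ≤ |lft x b.1 - b.2|)

/-- An `M₁` parametric representation of (the completed graph of) `x`: a continuous map of
`[0,1]` onto the graph which is nondecreasing for the graph order. -/
def IsM1Rep (x : ℝ → ℝ) (rr uu : ℝ → ℝ) : Prop :=
  ContinuousOn rr (Set.Icc 0 1) ∧ ContinuousOn uu (Set.Icc 0 1) ∧
  (fun s => (rr s, uu s)) '' Set.Icc 0 1 = thinGraph x ∧
  ∀ s₁ ∈ Set.Icc (0:ℝ) 1, ∀ s₂ ∈ Set.Icc (0:ℝ) 1, s₁ ≤ s₂ →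
    GraphLe x (rr s₁, uu s₁) (rr s₂, uu s₂)

/-- The Skorokhod `M₁` metric on `D([0,1],ℝ)`. -/
def dM1 (x y : ℝ → ℝ) : ℝ :=
  sInf {c | ∃ r₁ u₁ r₂ u₂ : ℝ → ℝ, IsM1Rep x r₁ u₁ ∧ IsM1Rep y r₂ u₂ ∧
    c = (⨆ s : Set.Icc (0:ℝ) 1, |r₁ (s : ℝ) - r₂ (s : ℝ)|)
      ⊔ (⨆ s : Set.Icc (0:ℝ) 1, |u₁ (s : ℝ) - u₂ (s : ℝ)|)}

/-!
For nondecreasing càdlàg `f`, the completed graph is parametrised by the level `s = t + z`,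
`s ∈ [f 0, 1 + f 1]`; its time coordinate `graphTime f s` is a 1-Lipschitz function of `s`.
Since the completed graph of `x ∨ y` reaches level `s` only once both graphs have,
`graphTime (x ∨ y) = graphTime x ⊓ graphTime y`. An `M₁` distance below `δ` moves `graphTime` by
at most `3δ` and the endpoint values by at most `δ`; conversely, through the canonical
parametrisation `σ ↦ (graphTime f s, s - graphTime f s)` with `s` affine in `σ`, these two
quantities bound the `M₁` distance. Hence `d(x ∨ y, x₀ ∨ y₀) ≤ 5 max (d(x, x₀), d(y, y₀))`.
-/

open Function

section MonotoneCadlag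

variable {f : ℝ → ℝ}

lemma lft_zero (f : ℝ → ℝ) : lft f 0 = f 0 := if_pos rfl

lemma lft_of_ne_zero {t : ℝ} (ht : t ≠ 0) : lft f t = leftLim f t := if_neg ht

lemma le_lft_of_lt (hc : Cadlag f) (hm : MonotoneOn f (Icc 0 1)) {u t : ℝ}
    (hu : u ∈ Icc (0:ℝ) 1) (ht : t ≤ 1) (hut : u < t) : f u ≤ lft f t := by
  have ht0 : 0 < t := hu.1.trans_lt hut
  rw [lft_of_ne_zero ht0.ne']
  refine ge_of_tendsto (hc.2 t ⟨ht0, ht⟩) ?_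
  filter_upwards [Ioo_mem_nhdsLT hut] with v hv
  exact hm hu ⟨hu.1.trans hv.1.le, hv.2.le.trans ht⟩ hv.1.le

lemma lft_le (hc : Cadlag f) (hm : MonotoneOn f (Icc 0 1)) {t : ℝ} (ht : t ∈ Icc (0:ℝ) 1) :
    lft f t ≤ f t := by
  rcases ht.1.eq_or_lt with rfl | ht0
  · rw [lft_zero]
  rw [lft_of_ne_zero ht0.ne']
  refine le_of_tendsto (hc.2 t ⟨ht0, ht.2⟩) ?_
  filter_upwards [Ioo_mem_nhdsLT ht0] with v hv
  exact hm ⟨hv.1.le, hv.2.le.trans ht.2⟩ ht hv.2.le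

lemma lft_mono (hc : Cadlag f) (hm : MonotoneOn f (Icc 0 1)) {u t : ℝ}
    (hu : u ∈ Icc (0:ℝ) 1) (ht : t ∈ Icc (0:ℝ) 1) (hut : u ≤ t) : lft f u ≤ lft f t := by
  rcases hut.eq_or_lt with rfl | hut
  · rfl
  · exact (lft_le hc hm hu).trans (le_lft_of_lt hc hm hu ht.2 hut)

lemma apply_zero_le_lft (hc : Cadlag f) (hm : MonotoneOn f (Icc 0 1)) {t : ℝ}
    (ht : t ∈ Icc (0:ℝ) 1) : f 0 ≤ lft f t := by
  simpa only [lft_zero] using lft_mono hc hm ⟨le_rfl, zero_le_one⟩ ht ht.1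

lemma mem_thinGraph_iff (hc : Cadlag f) (hm : MonotoneOn f (Icc 0 1)) {t z : ℝ} :
    (t, z) ∈ thinGraph f ↔ t ∈ Icc (0:ℝ) 1 ∧ lft f t ≤ z ∧ z ≤ f t := by
  constructor
  · rintro ⟨ht, l, hl, hz⟩
    have := lft_le hc hm ht
    dsimp only at ht hz
    exact ⟨ht, by nlinarith [hl.2], by nlinarith [hl.1]⟩
  · rintro ⟨ht, h₁, h₂⟩
    refine ⟨ht, ?_⟩
    rcases (lft_le hc hm ht).eq_or_lt with heq | hlt
    · exact ⟨0, ⟨le_rfl, zero_le_one⟩, by simp only [zero_mul, sub_zero, one_mul]; linarith⟩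
    · refine ⟨(f t - z) / (f t - lft f t), ⟨by apply div_nonneg <;> linarith,
        (div_le_one (by linarith)).2 (by linarith)⟩, ?_⟩
      field_simp
      ring

end MonotoneCadlag

lemma cadlag_sup {x y : ℝ → ℝ} (hx : Cadlag x) (hy : Cadlag y) :
    Cadlag (fun t => x t ⊔ y t) :=
  ⟨fun t ht => (hx.1 t ht).sup (hy.1 t ht), fun t ht => by
    rw [leftLim_eq_of_tendsto ((hx.2 t ht).sup_nhds (hy.2 t ht))]
    exact (hx.2 t ht).sup_nhds (hy.2 t ht)⟩

lemma lft_sup {x y : ℝ → ℝ} (hx : Cadlag x) (hy : Cadlag y) {t : ℝ} (ht : t ∈ Icc (0:ℝ) 1) :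
    lft (fun u => x u ⊔ y u) t = lft x t ⊔ lft y t := by
  rcases ht.1.eq_or_lt with rfl | ht0
  · simp only [lft_zero]
  simp only [lft_of_ne_zero ht0.ne']
  exact leftLim_eq_of_tendsto ((hx.2 t ⟨ht0, ht.2⟩).sup_nhds (hy.2 t ⟨ht0, ht.2⟩))

lemma csSup_inter_eq_inf {α : Type*} [ConditionallyCompleteLinearOrder α] {A B : Set α} {a : α}
    (haA : a ∈ A) (haB : a ∈ B) (hA : BddAbove A) (hB : BddAbove B)
    (hA_down : ∀ u ∈ A, Icc a u ⊆ A) (hB_down : ∀ u ∈ B, Icc a u ⊆ B) :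
    sSup (A ∩ B) = sSup A ⊓ sSup B := by
  have hAB : BddAbove (A ∩ B) := hA.mono inter_subset_left
  refine le_antisymm (le_inf (csSup_le_csSup hA ⟨a, haA, haB⟩ inter_subset_left)
    (csSup_le_csSup hB ⟨a, haA, haB⟩ inter_subset_right)) (le_of_forall_lt fun c hc => ?_)
  rcases lt_or_ge c a with hca | hac
  · exact hca.trans_le (le_csSup hAB ⟨haA, haB⟩)
  obtain ⟨u, huA, hcu⟩ := exists_lt_of_lt_csSup ⟨a, haA⟩ (hc.trans_le inf_le_left)
  obtain ⟨v, hvB, hcv⟩ := exists_lt_of_lt_csSup ⟨a, haB⟩ (hc.trans_le inf_le_right)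
  have ha : a ≤ min u v := hac.trans (lt_min hcu hcv).le
  exact (lt_min hcu hcv).trans_le (le_csSup hAB
    ⟨hA_down u huA ⟨ha, min_le_left u v⟩, hB_down v hvB ⟨ha, min_le_right u v⟩⟩)

/-- For nondecreasing càdlàg `f`, the completed graph meets each line `t + z = s`,
`f 0 ≤ s ≤ 1 + f 1`, in exactly one point; `graphTime f s` is its time coordinate. -/
def graphTime (f : ℝ → ℝ) (s : ℝ) : ℝ :=
  sSup (insert 0 {t | t ∈ Icc (0:ℝ) 1 ∧ t + lft f t < s})

section GraphTime

variable {f : ℝ → ℝ}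

lemma bddAbove_graphTime_set (f : ℝ → ℝ) (s : ℝ) :
    BddAbove (insert 0 {t | t ∈ Icc (0:ℝ) 1 ∧ t + lft f t < s}) :=
  ⟨1, forall_mem_insert.2 ⟨zero_le_one, fun _ ht => ht.1.2⟩⟩

lemma graphTime_nonneg (f : ℝ → ℝ) (s : ℝ) : 0 ≤ graphTime f s :=
  le_csSup (bddAbove_graphTime_set f s) (mem_insert _ _)

lemma graphTime_le_one (f : ℝ → ℝ) (s : ℝ) : graphTime f s ≤ 1 :=
  csSup_le (insert_nonempty _ _) (forall_mem_insert.2 ⟨zero_le_one, fun _ ht => ht.1.2⟩)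

lemma le_graphTime {s t : ℝ} (ht : t ∈ Icc (0:ℝ) 1) (hts : t + lft f t < s) :
    t ≤ graphTime f s :=
  le_csSup (bddAbove_graphTime_set f s) (mem_insert_of_mem _ ⟨ht, hts⟩)

lemma graphTime_mono (f : ℝ → ℝ) : Monotone (graphTime f) := fun _ _ h =>
  csSup_le_csSup (bddAbove_graphTime_set f _) (insert_nonempty _ _)
    (insert_subset_insert fun _ ht => ⟨ht.1, ht.2.trans_le h⟩)

lemma graphTime_le_add_sub (hc : Cadlag f) (hm : MonotoneOn f (Icc 0 1)) {s₁ s₂ : ℝ}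
    (h : s₁ ≤ s₂) : graphTime f s₂ ≤ graphTime f s₁ + (s₂ - s₁) := by
  refine csSup_le (insert_nonempty _ _) (forall_mem_insert.2 ⟨?_, fun t ht => ?_⟩)
  · linarith [graphTime_nonneg f s₁]
  rcases lt_or_ge (t - (s₂ - s₁)) 0 with hneg | hpos
  · linarith [graphTime_nonneg f s₁]
  have ht' : t - (s₂ - s₁) ∈ Icc (0:ℝ) 1 := ⟨hpos, by linarith [ht.1.2]⟩
  have := lft_mono hc hm ht' ht.1 (by linarith)
  linarith [le_graphTime ht' (by linarith [ht.2] : t - (s₂ - s₁) + lft f (t - (s₂ - s₁)) < s₁)]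

lemma abs_graphTime_sub_le (hc : Cadlag f) (hm : MonotoneOn f (Icc 0 1)) (s₁ s₂ : ℝ) :
    |graphTime f s₁ - graphTime f s₂| ≤ |s₁ - s₂| := by
  rcases le_total s₁ s₂ with h | h
  · have := graphTime_mono f h
    have := graphTime_le_add_sub hc hm h
    rw [abs_of_nonpos (by linarith), abs_of_nonpos (by linarith)]
    linarith
  · have := graphTime_mono f h
    have := graphTime_le_add_sub hc hm h
    rw [abs_of_nonneg (by linarith), abs_of_nonneg (by linarith)]
    linarith

lemma continuous_graphTime (hc : Cadlag f) (hm : MonotoneOn f (Icc 0 1)) :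
    Continuous (graphTime f) :=
  (LipschitzWith.of_dist_le_mul (K := 1) fun a b => by
    simpa only [Real.dist_eq, NNReal.coe_one, one_mul] using abs_graphTime_sub_le hc hm a b).continuous

lemma graphTime_of_le (hc : Cadlag f) (hm : MonotoneOn f (Icc 0 1)) {s : ℝ} (hs : s ≤ f 0) :
    graphTime f s = 0 := by
  refine le_antisymm (csSup_le (insert_nonempty _ _)
    (forall_mem_insert.2 ⟨le_rfl, fun t ht => ?_⟩)) (graphTime_nonneg f s)
  linarith [apply_zero_le_lft hc hm ht.1, ht.1.1, ht.2]

lemma graphTime_add_of_mem_thinGraph (hc : Cadlag f) (hm : MonotoneOn f (Icc 0 1)) {t z : ℝ}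
    (h : (t, z) ∈ thinGraph f) : graphTime f (t + z) = t := by
  obtain ⟨ht, hlz, hzf⟩ := (mem_thinGraph_iff hc hm).1 h
  refine le_antisymm (csSup_le (insert_nonempty _ _)
    (forall_mem_insert.2 ⟨ht.1, fun u hu => ?_⟩)) (le_of_forall_lt fun c hct => ?_)
  · by_contra! htu
    linarith [le_lft_of_lt hc hm ht hu.1.2 htu, hu.2]
  rcases lt_or_ge c 0 with hc0 | hc0
  · exact hc0.trans_le (graphTime_nonneg f _)
  have hmid : (c + t) / 2 ∈ Icc (0:ℝ) 1 := ⟨by linarith, by linarith [ht.2]⟩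
  have := lft_le hc hm hmid
  have := le_lft_of_lt hc hm hmid ht.2 (by linarith)
  exact (by linarith : c < (c + t) / 2).trans_le (le_graphTime hmid (by linarith))

lemma lft_graphTime_le (hc : Cadlag f) (hm : MonotoneOn f (Icc 0 1)) {s : ℝ} (hs : f 0 ≤ s) :
    lft f (graphTime f s) ≤ s - graphTime f s := by
  set T := graphTime f s with hT_def
  rcases (graphTime_nonneg f s).eq_or_lt with hT | hT
  · rw [show T = 0 from hT.symm, lft_zero]; linarith
  have hlim : Tendsto (fun u => u + f u) (𝓝[<] T) (𝓝 (T + leftLim f T)) :=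
    (tendsto_id.mono_left nhdsWithin_le_nhds).add (hc.2 T ⟨hT, graphTime_le_one f s⟩)
  have hle : T + leftLim f T ≤ s := by
    refine le_of_tendsto hlim ?_
    filter_upwards [Ioo_mem_nhdsLT hT] with u hu
    obtain ⟨w, hw, huw⟩ := exists_lt_of_lt_csSup (insert_nonempty _ _) hu.2
    rcases hw with rfl | hw
    · exact absurd huw (not_lt.2 hu.1.le)
    have := le_lft_of_lt hc hm ⟨hu.1.le, huw.le.trans hw.1.2⟩ hw.1.2 huw
    linarith [hw.2]
  rw [lft_of_ne_zero hT.ne']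
  linarith

lemma sub_graphTime_le (hc : Cadlag f) (hm : MonotoneOn f (Icc 0 1)) {s : ℝ}
    (hs : s ≤ 1 + f 1) : s - graphTime f s ≤ f (graphTime f s) := by
  set T := graphTime f s with hT_def
  rcases (graphTime_le_one f s).eq_or_lt with hT | hT
  · rw [show T = 1 from hT]; linarith
  by_contra! hlt
  have hright : Tendsto (fun u => u + f u) (𝓝[>] T) (𝓝 (T + f T)) :=
    (tendsto_id.mono_left nhdsWithin_le_nhds).add
      ((hc.1 T ⟨graphTime_nonneg f s, hT⟩).tendsto.mono_left (nhdsWithin_mono _ Ioi_subset_Ici_self))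
  obtain ⟨u, hus, hu⟩ := ((hright.eventually_lt_const (show T + f T < s by linarith)).and
    (Ioo_mem_nhdsGT_of_mem ⟨le_rfl, hT⟩)).exists
  have huI : u ∈ Icc (0:ℝ) 1 := ⟨(graphTime_nonneg f s).trans hu.1.le, hu.2.le⟩
  linarith [le_graphTime huI (by linarith [lft_le hc hm huI] : u + lft f u < s), hu.1]

lemma graphTime_mem_thinGraph (hc : Cadlag f) (hm : MonotoneOn f (Icc 0 1)) {s : ℝ}
    (hs : s ∈ Icc (f 0) (1 + f 1)) : (graphTime f s, s - graphTime f s) ∈ thinGraph f :=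
  (mem_thinGraph_iff hc hm).2 ⟨⟨graphTime_nonneg f s, graphTime_le_one f s⟩,
    lft_graphTime_le hc hm hs.1, sub_graphTime_le hc hm hs.2⟩

end GraphTime

lemma graphTime_sup {x y : ℝ → ℝ} (hx : Cadlag x) (hy : Cadlag y)
    (hmx : MonotoneOn x (Icc 0 1)) (hmy : MonotoneOn y (Icc 0 1)) (s : ℝ) :
    graphTime (fun t => x t ⊔ y t) s = graphTime x s ⊓ graphTime y s := by
  have hdown : ∀ {f : ℝ → ℝ}, Cadlag f → MonotoneOn f (Icc 0 1) →
      ∀ u ∈ insert 0 {t | t ∈ Icc (0:ℝ) 1 ∧ t + lft f t < s},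
        Icc 0 u ⊆ insert 0 {t | t ∈ Icc (0:ℝ) 1 ∧ t + lft f t < s} := by
    rintro f hc hm u (rfl | hu) v hv
    · exact Or.inl (le_antisymm hv.2 hv.1)
    have hvI : v ∈ Icc (0:ℝ) 1 := ⟨hv.1, hv.2.trans hu.1.2⟩
    exact Or.inr ⟨hvI, by linarith [lft_mono hc hm hvI hu.1 hv.2, hu.2, hv.2]⟩
  rw [graphTime, graphTime, graphTime, ← csSup_inter_eq_inf (mem_insert _ _) (mem_insert _ _)
    (bddAbove_graphTime_set x s) (bddAbove_graphTime_set y s) (hdown hx hmx) (hdown hy hmy),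
    ← insert_inter_distrib]
  congr 2
  ext t
  simp only [mem_inter_iff]
  constructor
  · rintro ⟨ht, h⟩
    rw [lft_sup hx hy ht, ← lt_sub_iff_add_lt', sup_lt_iff] at h
    exact ⟨⟨ht, by linarith [h.1]⟩, ⟨ht, by linarith [h.2]⟩⟩
  · rintro ⟨⟨ht, hxt⟩, -, hyt⟩
    refine ⟨ht, ?_⟩
    rw [lft_sup hx hy ht, ← lt_sub_iff_add_lt', sup_lt_iff]
    constructor <;> linarith

def graphLevel (f : ℝ → ℝ) (σ : ℝ) : ℝ := f 0 + σ * (1 + f 1 - f 0)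

def canonicalTime (f : ℝ → ℝ) (σ : ℝ) : ℝ := graphTime f (graphLevel f σ)

def canonicalValue (f : ℝ → ℝ) (σ : ℝ) : ℝ := graphLevel f σ - canonicalTime f σ

section Canonical

variable {f : ℝ → ℝ}

lemma graphLevel_mem (hm : MonotoneOn f (Icc 0 1)) {σ : ℝ} (hσ : σ ∈ Icc (0:ℝ) 1) :
    graphLevel f σ ∈ Icc (f 0) (1 + f 1) := by
  have : f 0 ≤ f 1 := hm ⟨le_rfl, zero_le_one⟩ ⟨zero_le_one, le_rfl⟩ zero_le_one
  constructor <;> unfold graphLevel <;> nlinarith [hσ.1, hσ.2]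

lemma continuous_graphLevel (f : ℝ → ℝ) : Continuous (graphLevel f) := by
  unfold graphLevel; fun_prop

lemma graphLevel_monotone (hm : MonotoneOn f (Icc 0 1)) : Monotone (graphLevel f) := by
  have : f 0 ≤ f 1 := hm ⟨le_rfl, zero_le_one⟩ ⟨zero_le_one, le_rfl⟩ zero_le_one
  intro σ₁ σ₂ h
  unfold graphLevel
  nlinarith

lemma image_canonical (hc : Cadlag f) (hm : MonotoneOn f (Icc 0 1)) :
    (fun σ => (canonicalTime f σ, canonicalValue f σ)) '' Icc 0 1 = thinGraph f := by
  have hD : 0 < 1 + f 1 - f 0 := by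
    linarith [hm ⟨le_rfl, zero_le_one⟩ ⟨zero_le_one, le_rfl⟩ zero_le_one]
  ext ⟨t, z⟩
  constructor
  · rintro ⟨σ, hσ, hp⟩
    rw [← hp]
    exact graphTime_mem_thinGraph hc hm (graphLevel_mem hm hσ)
  intro hp
  obtain ⟨ht, hlz, hzf⟩ := (mem_thinGraph_iff hc hm).1 hp
  have hσ : graphLevel f ((t + z - f 0) / (1 + f 1 - f 0)) = t + z := by
    unfold graphLevel; field_simp; ring
  have h0 := apply_zero_le_lft hc hm ht
  have h1 : f t ≤ f 1 := hm ht ⟨zero_le_one, le_rfl⟩ ht.2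
  refine ⟨(t + z - f 0) / (1 + f 1 - f 0), ⟨div_nonneg (by linarith [ht.1]) hD.le,
    (div_le_one hD).2 (by linarith [ht.2])⟩, ?_⟩
  simp only [canonicalValue, canonicalTime, hσ, graphTime_add_of_mem_thinGraph hc hm hp,
    add_sub_cancel_left]

lemma isM1Rep_canonical (hc : Cadlag f) (hm : MonotoneOn f (Icc 0 1)) :
    IsM1Rep f (canonicalTime f) (canonicalValue f) := by
  have hcont : Continuous (canonicalTime f) :=
    (continuous_graphTime hc hm).comp (continuous_graphLevel f)
  refine ⟨hcont.continuousOn, ((continuous_graphLevel f).sub hcont).continuousOn,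
    image_canonical hc hm, fun σ₁ hσ₁ σ₂ hσ₂ h => ?_⟩
  have hs := graphLevel_monotone hm h
  rcases (graphTime_mono f hs).eq_or_lt with heq | hlt
  · refine Or.inr ⟨heq, ?_⟩
    have h₁ := lft_graphTime_le hc hm (graphLevel_mem hm hσ₁).1
    have h₂ := lft_graphTime_le hc hm (graphLevel_mem hm hσ₂).1
    simp only [canonicalValue, canonicalTime] at heq ⊢
    rw [heq] at h₁ ⊢
    rw [abs_of_nonpos (by linarith), abs_of_nonpos (by linarith)]
    linarith
  · exact Or.inl hlt

end Canonical

section M1Rep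

variable {f r u : ℝ → ℝ}

lemma IsM1Rep.mem_thinGraph (h : IsM1Rep f r u) {σ : ℝ} (hσ : σ ∈ Icc (0:ℝ) 1) :
    (r σ, u σ) ∈ thinGraph f :=
  h.2.2.1 ▸ mem_image_of_mem _ hσ

lemma IsM1Rep.exists_eq (h : IsM1Rep f r u) {t z : ℝ} (hp : (t, z) ∈ thinGraph f) :
    ∃ σ ∈ Icc (0:ℝ) 1, r σ = t ∧ u σ = z := by
  rw [← h.2.2.1] at hp
  obtain ⟨σ, hσ, hp⟩ := hp
  exact ⟨σ, hσ, congrArg Prod.fst hp, congrArg Prod.snd hp⟩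

lemma IsM1Rep.apply_zero (hc : Cadlag f) (hm : MonotoneOn f (Icc 0 1)) (h : IsM1Rep f r u) :
    u 0 = f 0 := by
  have hI0 : (0:ℝ) ∈ Icc (0:ℝ) 1 := ⟨le_rfl, zero_le_one⟩
  obtain ⟨σ, hσ, hrσ, -⟩ := h.exists_eq
    ((mem_thinGraph_iff hc hm).2 ⟨hI0, (lft_zero f).le, le_rfl⟩)
  obtain ⟨hr0, hlu, hu⟩ := (mem_thinGraph_iff hc hm).1 (h.mem_thinGraph hI0)
  have hr : r 0 = 0 := by
    rcases h.2.2.2 0 hI0 σ hσ hσ.1 with hlt | ⟨heq, -⟩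
    · linarith [hr0.1]
    · exact heq.trans hrσ
  rw [hr] at hlu hu
  rw [lft_zero] at hlu
  linarith

lemma IsM1Rep.apply_one (hc : Cadlag f) (hm : MonotoneOn f (Icc 0 1)) (h : IsM1Rep f r u) :
    u 1 = f 1 := by
  have hI1 : (1:ℝ) ∈ Icc (0:ℝ) 1 := ⟨zero_le_one, le_rfl⟩
  obtain ⟨σ, hσ, hrσ, huσ⟩ := h.exists_eq
    ((mem_thinGraph_iff hc hm).2 ⟨hI1, lft_le hc hm hI1, le_rfl⟩)
  obtain ⟨hr1, hlu, hu⟩ := (mem_thinGraph_iff hc hm).1 (h.mem_thinGraph hI1)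
  rcases h.2.2.2 σ hσ 1 hI1 hσ.2 with hlt | ⟨heq, habs⟩
  · simp only [hrσ] at hlt; linarith [hr1.2]
  -- the graph order forces `(r 1, u 1)` to be the top point `(1, f 1)` of the last segment
  simp only [hrσ, huσ] at heq habs
  rw [← heq] at habs hlu hu
  have := lft_le hc hm hI1
  rw [abs_of_nonpos (by linarith), abs_of_nonpos (by linarith)] at habs
  linarith

end M1Rep

lemma abs_sub_le_iSup_of_continuousOn {r₁ r₂ : ℝ → ℝ} (h₁ : ContinuousOn r₁ (Icc 0 1))
    (h₂ : ContinuousOn r₂ (Icc 0 1)) {σ : ℝ} (hσ : σ ∈ Icc (0:ℝ) 1) :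
    |r₁ σ - r₂ σ| ≤ ⨆ s : Icc (0:ℝ) 1, |r₁ s - r₂ s| :=
  le_ciSup (isCompact_range (h₁.domRestrict.sub h₂.domRestrict).abs).bddAbove
    (⟨σ, hσ⟩ : Icc (0:ℝ) 1)

section DM1

variable {f g : ℝ → ℝ}

lemma dM1_nonneg (f g : ℝ → ℝ) : 0 ≤ dM1 f g :=
  Real.sInf_nonneg <| by
    rintro _ ⟨r₁, u₁, r₂, u₂, -, -, rfl⟩
    exact (Real.iSup_nonneg fun _ => abs_nonneg _).trans le_sup_left

lemma dM1_le_of_forall_le {r₁ u₁ r₂ u₂ : ℝ → ℝ} (h₁ : IsM1Rep f r₁ u₁) (h₂ : IsM1Rep g r₂ u₂)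
    {b : ℝ} (hb : 0 ≤ b) (hr : ∀ σ ∈ Icc (0:ℝ) 1, |r₁ σ - r₂ σ| ≤ b)
    (hu : ∀ σ ∈ Icc (0:ℝ) 1, |u₁ σ - u₂ σ| ≤ b) : dM1 f g ≤ b := by
  unfold dM1
  refine csInf_le_of_le ⟨0, ?_⟩ ⟨r₁, u₁, r₂, u₂, h₁, h₂, rfl⟩ (sup_le
    (Real.iSup_le (fun s : Icc (0:ℝ) 1 => hr s s.2) hb)
    (Real.iSup_le (fun s : Icc (0:ℝ) 1 => hu s s.2) hb))
  rintro _ ⟨r₁, u₁, r₂, u₂, -, -, rfl⟩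
  exact (Real.iSup_nonneg fun _ => abs_nonneg _).trans le_sup_left

lemma exists_isM1Rep_of_dM1_lt (hf : Cadlag f) (hmf : MonotoneOn f (Icc 0 1))
    (hg : Cadlag g) (hmg : MonotoneOn g (Icc 0 1)) {δ : ℝ} (h : dM1 f g < δ) :
    ∃ r₁ u₁ r₂ u₂ : ℝ → ℝ, IsM1Rep f r₁ u₁ ∧ IsM1Rep g r₂ u₂ ∧
      ∀ σ ∈ Icc (0:ℝ) 1, |r₁ σ - r₂ σ| ≤ δ ∧ |u₁ σ - u₂ σ| ≤ δ := by
  unfold dM1 at h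
  obtain ⟨_, ⟨r₁, u₁, r₂, u₂, h₁, h₂, rfl⟩, hlt⟩ := exists_lt_of_csInf_lt
    (by exact ⟨_, _, _, _, _, isM1Rep_canonical hf hmf, isM1Rep_canonical hg hmg, rfl⟩) h
  refine ⟨r₁, u₁, r₂, u₂, h₁, h₂, fun σ hσ => ⟨?_, ?_⟩⟩
  · exact ((abs_sub_le_iSup_of_continuousOn h₁.1 h₂.1 hσ).trans le_sup_left).trans hlt.le
  · exact ((abs_sub_le_iSup_of_continuousOn h₁.2.1 h₂.2.1 hσ).trans le_sup_right).trans hlt.le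

lemma graphTime_le_add_of_isM1Rep (hf : Cadlag f) (hmf : MonotoneOn f (Icc 0 1))
    (hg : Cadlag g) (hmg : MonotoneOn g (Icc 0 1)) {r₁ u₁ r₂ u₂ : ℝ → ℝ} {δ : ℝ} (hδ : 0 ≤ δ)
    (h₁ : IsM1Rep f r₁ u₁) (h₂ : IsM1Rep g r₂ u₂)
    (hb : ∀ σ ∈ Icc (0:ℝ) 1, |r₁ σ - r₂ σ| ≤ δ ∧ |u₁ σ - u₂ σ| ≤ δ) (s : ℝ) :
    graphTime f s ≤ graphTime g s + 3 * δ := by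
  have hI1 : (1:ℝ) ∈ Icc (0:ℝ) 1 := ⟨zero_le_one, le_rfl⟩
  rcases le_or_gt s (f 0) with hs0 | hs0
  · rw [graphTime_of_le hf hmf hs0]
    linarith [graphTime_nonneg g s]
  rcases le_or_gt (1 + f 1) s with hs1 | hs1
  · have hg1f1 : -δ ≤ f 1 - g 1 := by
      have := (hb 1 hI1).2
      rw [h₁.apply_one hf hmf, h₂.apply_one hg hmg] at this
      exact (abs_le.1 this).1
    have hg1 : graphTime g (1 + g 1) = 1 := graphTime_add_of_mem_thinGraph hg hmg
      ((mem_thinGraph_iff hg hmg).2 ⟨hI1, lft_le hg hmg hI1, le_rfl⟩)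
    have : 1 - δ ≤ graphTime g s := by
      rcases le_total (1 + g 1) s with h | h
      · linarith [graphTime_mono g h]
      · linarith [graphTime_le_add_sub hg hmg h]
    linarith [graphTime_le_one f s]
  -- compare along the parameter `σ` at which the first representation passes through level `s`
  obtain ⟨σ, hσ, hr, hu⟩ :=
    h₁.exists_eq (graphTime_mem_thinGraph hf hmf ⟨hs0.le, hs1.le⟩)
  have hTg := graphTime_add_of_mem_thinGraph hg hmg (h₂.mem_thinGraph hσ)
  obtain ⟨hrδ, huδ⟩ := hb σ hσ
  rw [abs_le] at hrδ huδ
  have hs : |r₂ σ + u₂ σ - s| ≤ 2 * δ := by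
    rw [abs_le]; constructor <;> linarith
  have hlip := abs_le.1 ((abs_graphTime_sub_le hg hmg (r₂ σ + u₂ σ) s).trans hs)
  linarith

lemma abs_graphTime_sub_le_of_dM1_lt (hf : Cadlag f) (hmf : MonotoneOn f (Icc 0 1))
    (hg : Cadlag g) (hmg : MonotoneOn g (Icc 0 1)) {δ : ℝ} (h : dM1 f g < δ) (s : ℝ) :
    |graphTime f s - graphTime g s| ≤ 3 * δ := by
  obtain ⟨r₁, u₁, r₂, u₂, h₁, h₂, hb⟩ := exists_isM1Rep_of_dM1_lt hf hmf hg hmg h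
  have hδ : 0 ≤ δ := (dM1_nonneg f g).trans h.le
  have hb' : ∀ σ ∈ Icc (0:ℝ) 1, |r₂ σ - r₁ σ| ≤ δ ∧ |u₂ σ - u₁ σ| ≤ δ := fun σ hσ => by
    rw [abs_sub_comm (r₂ σ), abs_sub_comm (u₂ σ)]; exact hb σ hσ
  rw [abs_le]
  constructor
  · linarith [graphTime_le_add_of_isM1Rep hg hmg hf hmf hδ h₂ h₁ hb' s]
  · linarith [graphTime_le_add_of_isM1Rep hf hmf hg hmg hδ h₁ h₂ hb s]

lemma abs_sub_le_of_dM1_lt (hf : Cadlag f) (hmf : MonotoneOn f (Icc 0 1))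
    (hg : Cadlag g) (hmg : MonotoneOn g (Icc 0 1)) {δ : ℝ} (h : dM1 f g < δ) :
    |f 0 - g 0| ≤ δ ∧ |f 1 - g 1| ≤ δ := by
  obtain ⟨r₁, u₁, r₂, u₂, h₁, h₂, hb⟩ := exists_isM1Rep_of_dM1_lt hf hmf hg hmg h
  have h0 := (hb 0 ⟨le_rfl, zero_le_one⟩).2
  have h1 := (hb 1 ⟨zero_le_one, le_rfl⟩).2
  rw [h₁.apply_zero hf hmf, h₂.apply_zero hg hmg] at h0
  rw [h₁.apply_one hf hmf, h₂.apply_one hg hmg] at h1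
  exact ⟨h0, h1⟩

lemma abs_graphLevel_sub_le {b : ℝ} (h0 : |f 0 - g 0| ≤ b) (h1 : |f 1 - g 1| ≤ b) {σ : ℝ}
    (hσ : σ ∈ Icc (0:ℝ) 1) : |graphLevel f σ - graphLevel g σ| ≤ b := by
  rw [abs_le] at h0 h1 ⊢
  unfold graphLevel
  constructor <;> nlinarith [hσ.1, hσ.2]

lemma dM1_le_of_abs_graphTime_sub_le (hf : Cadlag f) (hmf : MonotoneOn f (Icc 0 1))
    (hg : Cadlag g) (hmg : MonotoneOn g (Icc 0 1)) {a b : ℝ}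
    (hT : ∀ s, |graphTime f s - graphTime g s| ≤ a) (h0 : |f 0 - g 0| ≤ b)
    (h1 : |f 1 - g 1| ≤ b) : dM1 f g ≤ a + 2 * b := by
  have hr : ∀ σ ∈ Icc (0:ℝ) 1, |canonicalTime f σ - canonicalTime g σ| ≤ a + b := by
    intro σ hσ
    calc |canonicalTime f σ - canonicalTime g σ|
        ≤ |graphTime f (graphLevel f σ) - graphTime g (graphLevel f σ)|
          + |graphTime g (graphLevel f σ) - graphTime g (graphLevel g σ)| := abs_sub_le _ _ _
      _ ≤ a + b := add_le_add (hT _) ((abs_graphTime_sub_le hg hmg _ _).trans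
          (abs_graphLevel_sub_le h0 h1 hσ))
  have hb : 0 ≤ b := (abs_nonneg _).trans h0
  refine dM1_le_of_forall_le (isM1Rep_canonical hf hmf) (isM1Rep_canonical hg hmg)
    (by linarith [(abs_nonneg _).trans (hT 0)]) (fun σ hσ => by linarith [hr σ hσ])
    fun σ hσ => ?_
  have hl := abs_le.1 (abs_graphLevel_sub_le h0 h1 hσ)
  have hr' := abs_le.1 (hr σ hσ)
  rw [abs_le]
  unfold canonicalValue
  constructor <;> linarith [hl.1, hl.2, hr'.1, hr'.2]

end DM1

lemma dM1_sup_le {x y x₀ y₀ : ℝ → ℝ} (hx : Cadlag x) (hy : Cadlag y) (hx₀ : Cadlag x₀)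
    (hy₀ : Cadlag y₀) (hmx : MonotoneOn x (Icc 0 1)) (hmy : MonotoneOn y (Icc 0 1))
    (hmx₀ : MonotoneOn x₀ (Icc 0 1)) (hmy₀ : MonotoneOn y₀ (Icc 0 1)) :
    dM1 (fun t => x t ⊔ y t) (fun t => x₀ t ⊔ y₀ t) ≤ 5 * max (dM1 x x₀) (dM1 y y₀) := by
  refine le_of_forall_gt_imp_ge_of_dense fun c hc => ?_
  have hδx : dM1 x x₀ < c / 5 := by linarith [le_max_left (dM1 x x₀) (dM1 y y₀)]
  have hδy : dM1 y y₀ < c / 5 := by linarith [le_max_right (dM1 x x₀) (dM1 y y₀)]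
  obtain ⟨hx0, hx1⟩ := abs_sub_le_of_dM1_lt hx hmx hx₀ hmx₀ hδx
  obtain ⟨hy0, hy1⟩ := abs_sub_le_of_dM1_lt hy hmy hy₀ hmy₀ hδy
  have hT : ∀ s, |graphTime (fun t => x t ⊔ y t) s - graphTime (fun t => x₀ t ⊔ y₀ t) s|
      ≤ 3 * (c / 5) := fun s => by
    rw [graphTime_sup hx hy hmx hmy, graphTime_sup hx₀ hy₀ hmx₀ hmy₀]
    exact (abs_min_sub_min_le_max _ _ _ _).trans
      (max_le (abs_graphTime_sub_le_of_dM1_lt hx hmx hx₀ hmx₀ hδx s)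
        (abs_graphTime_sub_le_of_dM1_lt hy hmy hy₀ hmy₀ hδy s))
  have := dM1_le_of_abs_graphTime_sub_le (cadlag_sup hx hy)
    (fun a ha b hb hab => sup_le_sup (hmx ha hb hab) (hmy ha hb hab)) (cadlag_sup hx₀ hy₀)
    (fun a ha b hb hab => sup_le_sup (hmx₀ ha hb hab) (hmy₀ ha hb hab)) hT
    ((abs_max_sub_max_le_max _ _ _ _).trans (max_le hx0 hy0))
    ((abs_max_sub_max_le_max _ _ _ _).trans (max_le hx1 hy1))
  linarith

/-- the pointwise maximum `h(x,y) = x ∨ y` is continuous from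
`D²_↑` with the weak `M₁` topology (coordinatewise `M₁` convergence) to `D¹_↑` with `M₁`. -/
theorem stmt7 (x y : ℕ → ℝ → ℝ) (x₀ y₀ : ℝ → ℝ)
    (hx : ∀ n, Cadlag (x n)) (hy : ∀ n, Cadlag (y n))
    (hx₀ : Cadlag x₀) (hy₀ : Cadlag y₀)
    (hmx : ∀ n, MonotoneOn (x n) (Set.Icc 0 1)) (hmy : ∀ n, MonotoneOn (y n) (Set.Icc 0 1))
    (hmx₀ : MonotoneOn x₀ (Set.Icc 0 1)) (hmy₀ : MonotoneOn y₀ (Set.Icc 0 1))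
    (hcx : Tendsto (fun n => dM1 (x n) x₀) atTop (nhds 0))
    (hcy : Tendsto (fun n => dM1 (y n) y₀) atTop (nhds 0)) :
    Tendsto (fun n => dM1 (fun t => x n t ⊔ y n t) (fun t => x₀ t ⊔ y₀ t)) atTop (nhds 0) := by
  refine squeeze_zero (fun n => dM1_nonneg _ _)
    (fun n => dM1_sup_le (hx n) (hy n) hx₀ hy₀ (hmx n) (hmy n) hmx₀ hmy₀) ?_
  simpa using (hcx.max hcy).const_mul 5
end
end
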